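/- Let w be a measurable weight on (0,∞) such that for every z ∈ ℂ₊ the function t ↦ e^{−t z̄}/w(t) belongs to L²_w(0,∞). Suppose that 𝔏(L²_w(0,∞)), equipped with the norm ‖𝔏f‖ := ‖f‖_{L²_w}, is a Banach algebra with respect to pointwise multiplication; that is, for all f, g ∈ L²_w(0,∞) there exists h ∈ L²_w(0,∞) with 𝔏h = (𝔏f)·(𝔏g) on ℂ₊ and ‖h‖_{L²_w} ≤ ‖f‖_{L²_w} ‖g‖_{L²_w}. Let (λ_k)_{k∈ℕ} be a sequence in the open left half-plane, (b_k)_{k∈ℕ} a sequence of complex numbers with Σ_{k=1}^∞ |b_k|² < ∞, and μ := Σ_{k=1}^∞ |b_k|² δ_{−λ_k}. Then the Laplace–Carleson embedding 𝔏 : L²_w(0,∞) → L²(ℂ₊, μ) is bounded. -/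

import Mathlib

/-!
Point evaluation at `z ∈ ℂ₊` is bounded on the range of `𝔏`: since `𝔏f(z) = ⟨f, k_z⟩` in `L²_w`
with `k_z(t) = e^{-t z̄}/w(t)`, Cauchy–Schwarz gives `|𝔏f(z)| ≤ ‖k_z‖ ‖f‖`. The Banach algebra
property puts `(𝔏f)ⁿ` in the range with a preimage of norm at most `‖f‖ⁿ`, so
`|𝔏f(z)|ⁿ ≤ ‖k_z‖ ‖f‖ⁿ` for all `n`, and letting `n → ∞` removes the constant:
`|𝔏f(z)| ≤ ‖f‖`. Hence `∫ |𝔏f|² dμ = Σ |b_k|² |𝔏f(-λ_k)|² ≤ (Σ |b_k|²) ‖f‖²`.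
-/

open MeasureTheory Set Complex Filter ENNReal

/-- The Laplace transform of `f : (0,∞) → ℂ` at `z`. -/
noncomputable def laplaceT (f : ℝ → ℂ) (z : ℂ) : ℂ :=
  ∫ t in Set.Ioi (0:ℝ), f t * Complex.exp (-(t : ℂ) * z)

/-- The norm of `f` in the weighted space `L^p_w(0,∞)` (as an extended real). -/
noncomputable def lpwNorm (p : ℝ) (w : ℝ → ℝ) (f : ℝ → ℂ) : ℝ≥0∞ :=
  (∫⁻ t in Set.Ioi (0:ℝ), (‖f t‖₊ : ℝ≥0∞) ^ p * ENNReal.ofReal (w t)) ^ (1/p)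

/-- Boundedness of the Laplace–Carleson embedding `𝔏 : L^p_w(0,∞) → L^q(ℂ₊, μ)`. -/
def lcBounded (p q : ℝ) (w : ℝ → ℝ) (μ : Measure ℂ) : Prop :=
  ∃ C > 0, ∀ f : ℝ → ℂ, Measurable f →
    (∫⁻ z, (‖laplaceT f z‖₊ : ℝ≥0∞) ^ q ∂μ) ^ (1/q) ≤ ENNReal.ofReal C * lpwNorm p w f

theorem ENNReal.le_of_eventually_pow_le_mul_pow {x y K : ℝ≥0∞} (hK : K ≠ ∞)
    (h : ∀ᶠ n : ℕ in atTop, x ^ n ≤ K * y ^ n) : x ≤ y := by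
  by_contra! hyx
  have hratio : 1 < x / y := by
    rcases eq_or_ne y 0 with rfl | hy0
    · simp [ENNReal.div_zero hyx.ne']
    · exact (ENNReal.lt_div_iff_mul_lt (.inl hy0) (.inl hyx.ne_top)).2 (by simpa)
  have hunbdd := (ENNReal.tendsto_pow_atTop_nhds_top_iff.2 hratio).eventually
    (lt_mem_nhds hK.lt_top)
  obtain ⟨n, hn, hlt⟩ := (h.and hunbdd).exists
  refine hlt.not_ge ?_
  rw [div_eq_mul_inv, mul_pow, ← ENNReal.inv_pow, ← div_eq_mul_inv]
  exact ENNReal.div_le_of_le_mul hn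

theorem lintegral_sum_smul_dirac {α ι : Type*} [MeasurableSpace α] [MeasurableSingletonClass α]
    (c : ι → ℝ≥0∞) (a : ι → α) (F : α → ℝ≥0∞) :
    ∫⁻ x, F x ∂(Measure.sum fun k => c k • Measure.dirac (a k)) = ∑' k, c k * F (a k) := by
  simp only [lintegral_sum_measure, lintegral_smul_measure, lintegral_dirac, smul_eq_mul]

def LaplaceRangeIsBanachAlgebra (w : ℝ → ℝ) : Prop :=
  ∀ f g : ℝ → ℂ, Measurable f → Measurable g → lpwNorm 2 w f < ⊤ → lpwNorm 2 w g < ⊤ →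
    ∃ h : ℝ → ℂ, Measurable h ∧ lpwNorm 2 w h < ⊤ ∧
      (∀ z : ℂ, 0 < z.re → laplaceT h z = laplaceT f z * laplaceT g z) ∧
      lpwNorm 2 w h ≤ lpwNorm 2 w f * lpwNorm 2 w g

noncomputable def laplaceKernel (w : ℝ → ℝ) (z : ℂ) (t : ℝ) : ℂ :=
  Complex.exp (-(t : ℂ) * (starRingEnd ℂ) z) / (w t : ℂ)

section LaplaceRange

variable {w : ℝ → ℝ}

theorem lintegral_enorm_mul_enorm_mul_weight_le (hw : Measurable w) {f g : ℝ → ℂ}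
    (hf : Measurable f) (hg : Measurable g) :
    ∫⁻ t in Ioi 0, ‖f t‖ₑ * ‖g t‖ₑ * ENNReal.ofReal (w t) ≤ lpwNorm 2 w f * lpwNorm 2 w g := by
  set s : ℝ → ℝ≥0∞ := fun t => ENNReal.ofReal (w t) ^ (1 / 2 : ℝ)
  have hs : ∀ t, s t * s t = ENNReal.ofReal (w t) := fun t => by
    rw [← ENNReal.rpow_add_of_nonneg _ _ (by norm_num) (by norm_num)]; norm_num
  have hsq : ∀ (u : ℂ) t, (‖u‖ₑ * s t) ^ (2 : ℝ) = ‖u‖ₑ ^ (2 : ℝ) * ENNReal.ofReal (w t) := by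
    intro u t
    rw [ENNReal.mul_rpow_of_nonneg _ _ (by norm_num), ← ENNReal.rpow_mul]
    norm_num
  have hs_meas : Measurable s := hw.ennreal_ofReal.pow_const _
  calc ∫⁻ t in Ioi 0, ‖f t‖ₑ * ‖g t‖ₑ * ENNReal.ofReal (w t)
      = ∫⁻ t in Ioi 0, (‖f t‖ₑ * s t) * (‖g t‖ₑ * s t) := by
        congr with t; rw [← hs]; ring
    _ ≤ _ := ENNReal.lintegral_mul_le_Lp_mul_Lq _ .two_two
        (hf.enorm.mul hs_meas).aemeasurable (hg.enorm.mul hs_meas).aemeasurable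
    _ = lpwNorm 2 w f * lpwNorm 2 w g := by simp only [hsq]; rfl

theorem enorm_laplaceT_le (hw : Measurable w) (hwpos : ∀ t > 0, 0 < w t) {g : ℝ → ℂ}
    (hg : Measurable g) (z : ℂ) :
    ‖laplaceT g z‖ₑ ≤ lpwNorm 2 w g * lpwNorm 2 w (laplaceKernel w z) := by
  have hkernel : ∀ t : ℝ, 0 < t → ‖Complex.exp (-(t : ℂ) * z)‖ = ‖laplaceKernel w z t‖ * w t := by
    intro t ht
    rw [laplaceKernel, norm_div, Complex.norm_real, Real.norm_of_nonneg (hwpos t ht).le,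
      div_mul_cancel₀ _ (hwpos t ht).ne', Complex.norm_exp, Complex.norm_exp]
    simp
  calc ‖laplaceT g z‖ₑ ≤ ∫⁻ t in Ioi 0, ‖g t * Complex.exp (-(t : ℂ) * z)‖ₑ :=
        enorm_integral_le_lintegral_enorm _
    _ = ∫⁻ t in Ioi 0, ‖g t‖ₑ * ‖laplaceKernel w z t‖ₑ * ENNReal.ofReal (w t) := by
        refine setLIntegral_congr_fun measurableSet_Ioi fun t ht => ?_
        rw [← ofReal_norm, ← ofReal_norm, ← ofReal_norm, ← ENNReal.ofReal_mul (norm_nonneg _),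
          ← ENNReal.ofReal_mul (by positivity), norm_mul, hkernel t ht, mul_assoc]
    _ ≤ _ := lintegral_enorm_mul_enorm_mul_weight_le hw hg <| by
        unfold laplaceKernel; fun_prop

theorem exists_laplaceT_pow (halg : LaplaceRangeIsBanachAlgebra w) {f : ℝ → ℂ}
    (hf : Measurable f) (hfin : lpwNorm 2 w f < ⊤) (n : ℕ) :
    ∃ g : ℝ → ℂ, Measurable g ∧ lpwNorm 2 w g ≤ lpwNorm 2 w f ^ (n + 1) ∧
      ∀ z : ℂ, 0 < z.re → laplaceT g z = laplaceT f z ^ (n + 1) := by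
  induction n with
  | zero => exact ⟨f, hf, by simp, fun z _ => (pow_one _).symm⟩
  | succ n ih =>
    obtain ⟨g, hg, hgf, hgz⟩ := ih
    obtain ⟨h, hh, -, hhz, hhgf⟩ :=
      halg g f hg hf (hgf.trans_lt (ENNReal.pow_lt_top hfin)) hfin
    refine ⟨h, hh, ?_, fun z hz => by rw [hhz z hz, hgz z hz, ← pow_succ]⟩
    calc lpwNorm 2 w h ≤ lpwNorm 2 w g * lpwNorm 2 w f := hhgf
      _ ≤ lpwNorm 2 w f ^ (n + 1) * lpwNorm 2 w f := by gcongr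
      _ = lpwNorm 2 w f ^ (n + 1 + 1) := (pow_succ _ _).symm

theorem enorm_laplaceT_le_lpwNorm (hw : Measurable w) (hwpos : ∀ t > 0, 0 < w t)
    (halg : LaplaceRangeIsBanachAlgebra w) {z : ℂ} (hz : 0 < z.re)
    (hker : lpwNorm 2 w (laplaceKernel w z) ≠ ⊤) {f : ℝ → ℂ} (hf : Measurable f) :
    ‖laplaceT f z‖ₑ ≤ lpwNorm 2 w f := by
  rcases eq_top_or_lt_top (lpwNorm 2 w f) with htop | hfin
  · simp [htop]
  refine ENNReal.le_of_eventually_pow_le_mul_pow hker <|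
    (eventually_gt_atTop 0).mono fun n hn => ?_
  obtain ⟨m, rfl⟩ := Nat.exists_eq_add_one_of_ne_zero hn.ne'
  obtain ⟨g, hg, hgf, hgz⟩ := exists_laplaceT_pow halg hf hfin m
  calc ‖laplaceT f z‖ₑ ^ (m + 1) = ‖laplaceT g z‖ₑ := by rw [hgz z hz, enorm_pow]
    _ ≤ lpwNorm 2 w g * lpwNorm 2 w (laplaceKernel w z) := enorm_laplaceT_le hw hwpos hg z
    _ ≤ lpwNorm 2 w f ^ (m + 1) * lpwNorm 2 w (laplaceKernel w z) := by gcongr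
    _ = _ := mul_comm _ _

end LaplaceRange

theorem lcBounded_of_lintegral_le {p : ℝ} (hp : 0 < p) {w : ℝ → ℝ} {μ : Measure ℂ}
    {S : ℝ≥0∞} (hS : S ≠ ⊤)
    (h : ∀ f : ℝ → ℂ, Measurable f → ∫⁻ z, ‖laplaceT f z‖ₑ ^ p ∂μ ≤ S * lpwNorm p w f ^ p) :
    lcBounded p p w μ := by
  refine ⟨(S ^ (1 / p)).toReal + 1, by positivity, fun f hf => ?_⟩
  calc (∫⁻ z, ‖laplaceT f z‖ₑ ^ p ∂μ) ^ (1 / p)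
      ≤ (S * lpwNorm p w f ^ p) ^ (1 / p) := by gcongr; exact h f hf
    _ = S ^ (1 / p) * lpwNorm p w f := by
        rw [ENNReal.mul_rpow_of_nonneg _ _ (by positivity), ← ENNReal.rpow_mul,
          mul_one_div_cancel hp.ne', ENNReal.rpow_one]
    _ ≤ ENNReal.ofReal ((S ^ (1 / p)).toReal + 1) * lpwNorm p w f := by
        gcongr
        rw [ENNReal.ofReal_add ENNReal.toReal_nonneg zero_le_one,
          ENNReal.ofReal_toReal (ENNReal.rpow_ne_top_of_nonneg (by positivity) hS)]
        exact le_self_add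

/-- if `𝔏(L²_w(0,∞))` is a Banach algebra under pointwise
multiplication and `(b_k) ∈ ℓ²`, then the Laplace–Carleson embedding
`𝔏 : L²_w(0,∞) → L²(ℂ₊, μ)` with `μ = Σ_k |b_k|² δ_{-λ_k}` is bounded. -/
theorem laplace_carleson_bounded_of_banach_algebra
    (w : ℝ → ℝ) (hw : Measurable w) (hwpos : ∀ t > 0, 0 < w t)
    (hker : ∀ z : ℂ, 0 < z.re →
      lpwNorm 2 w (fun t => Complex.exp (-(t : ℂ) * (starRingEnd ℂ) z) / (w t : ℂ)) < ⊤)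
    (halg : ∀ f g : ℝ → ℂ, Measurable f → Measurable g →
      lpwNorm 2 w f < ⊤ → lpwNorm 2 w g < ⊤ →
      ∃ h : ℝ → ℂ, Measurable h ∧ lpwNorm 2 w h < ⊤ ∧
        (∀ z : ℂ, 0 < z.re → laplaceT h z = laplaceT f z * laplaceT g z) ∧
        lpwNorm 2 w h ≤ lpwNorm 2 w f * lpwNorm 2 w g)
    (lam : ℕ → ℂ) (hlam : ∀ k, (lam k).re < 0) (b : ℕ → ℂ)
    (hb : Summable fun k : ℕ => ‖b k‖ ^ 2)
    (μ : Measure ℂ)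
    (hμ : μ = Measure.sum fun k : ℕ =>
      (ENNReal.ofReal (‖b k‖ ^ 2)) • Measure.dirac (-(lam k))) :
    lcBounded 2 2 w μ := by
  have hS : ∑' k, ENNReal.ofReal (‖b k‖ ^ 2) ≠ ⊤ := by
    rw [← ENNReal.ofReal_tsum_of_nonneg (fun k => by positivity) hb]
    exact ENNReal.ofReal_ne_top
  refine lcBounded_of_lintegral_le two_pos hS fun f hf => ?_
  have hpoint : ∀ k, ‖laplaceT f (-lam k)‖ₑ ≤ lpwNorm 2 w f := fun k =>
    have hz : 0 < (-lam k).re := by simpa using hlam k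
    enorm_laplaceT_le_lpwNorm hw hwpos halg hz (hker _ hz).ne hf
  calc ∫⁻ z, ‖laplaceT f z‖ₑ ^ (2 : ℝ) ∂μ
      = ∑' k, ENNReal.ofReal (‖b k‖ ^ 2) * ‖laplaceT f (-lam k)‖ₑ ^ (2 : ℝ) := by
        rw [hμ, lintegral_sum_smul_dirac]
    _ ≤ ∑' k, ENNReal.ofReal (‖b k‖ ^ 2) * lpwNorm 2 w f ^ (2 : ℝ) := by
        gcongr with k; exact hpoint k
    _ = (∑' k, ENNReal.ofReal (‖b k‖ ^ 2)) * lpwNorm 2 w f ^ (2 : ℝ) := ENNReal.tsum_mul_right
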